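/- arXiv:2304.02270 — 7 statements merged into one kernel-verified Lean document; each statement's English description precedes it below -/
import Mathlib

section
/- Let $m_y > m_z \geq 1$ be integers. Let $p : \{1,\dots,m_y\} \times \{1,\dots,m_z\} \to (0,1)$ be such that for each $z$, $(p(1\mid z),\dots,p(m_y\mid z))$ is a probability vector (positive entries summing to $1$), and let $\pi : \{1,\dots,m_y\} \to (0,1)$ be arbitrary. Then there exists $\pi' : \{1,\dots,m_y\} \to (0,1)$ with $\pi' \neq \pi$ such that for every $z \in \{1,\dots,m_z\}$, $\sum_{y=1}^{m_y} p(y\mid z)/\pi(y) = \sum_{y=1}^{m_y} p(y\mid z)/\pi'(y)$. (This is the 'only if' direction of Theorem 1: when the outcome $y$ has more categories than the instrument $z$, the response mechanism is not identifiable from the observed-data distribution.) -/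
/-- Theorem 1 ('only if' direction): if the outcome `y` has more categories than the
instrument `z` (`m_z < m_y`), then the response mechanism `π` is not identifiable:
some other mechanism `π'` yields the same observed-data distribution. -/
theorem nonidentifiable_of_more_outcomes
    (my mz : ℕ) (hmz : 1 ≤ mz) (hlt : mz < my)
    (p : Fin my → Fin mz → ℝ)
    (hp : ∀ y z, 0 < p y z ∧ p y z < 1)
    (hpsum : ∀ z : Fin mz, ∑ y, p y z = 1)
    (π : Fin my → ℝ) (hπ : ∀ y, 0 < π y ∧ π y < 1) :
    ∃ π' : Fin my → ℝ, (∀ y, 0 < π' y ∧ π' y < 1) ∧ π' ≠ π ∧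
      ∀ z : Fin mz, ∑ y, p y z / π y = ∑ y, p y z / π' y := by
  have hmy : 0 < my := lt_of_le_of_lt (Nat.zero_le _) hlt
  haveI : Nonempty (Fin my) := ⟨⟨0, hmy⟩⟩
  set M : Matrix (Fin mz) (Fin my) ℝ := fun z y => p y z with hM
  have hker : LinearMap.ker M.mulVecLin ≠ ⊥ := by
    intro h
    have hinj : Function.Injective M.mulVecLin := LinearMap.ker_eq_bot.mp h
    have hle := LinearMap.finrank_le_finrank_of_injective hinj
    simp [Module.finrank_pi] at hle
    omega
  obtain ⟨v, hvmem, hv0⟩ := Submodule.exists_mem_ne_zero_of_ne_bot hker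
  have hvz : ∀ z : Fin mz, ∑ y, p y z * v y = 0 := by
    intro z
    have : M.mulVec v = 0 := by
      simpa [Matrix.mulVecLin_apply] using (LinearMap.mem_ker.mp hvmem)
    have := congrFun this z
    simpa [Matrix.mulVec, dotProduct, hM, mul_comm] using this
  set B : ℝ := Finset.univ.sup' Finset.univ_nonempty (fun y => |v y|) with hB
  have hB0 : 0 ≤ B := le_trans (abs_nonneg _) (Finset.le_sup' (fun y => |v y|) (Finset.mem_univ (Classical.arbitrary (Fin my))))
  set c : ℝ := Finset.univ.inf' Finset.univ_nonempty (fun y => (π y)⁻¹ - 1) with hc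
  have hc0 : 0 < c := by
    apply Finset.lt_inf'_iff _ |>.mpr
    intro y _
    have h1 := (hπ y).1
    have h2 := (hπ y).2
    have : 1 < (π y)⁻¹ := (one_lt_inv₀ h1).mpr h2
    linarith
  set t : ℝ := c / (2 * (B + 1)) with ht
  have ht0 : 0 < t := div_pos hc0 (by linarith)
  have hbound : ∀ y, t * |v y| < c := by
    intro y
    have hvy : |v y| ≤ B := Finset.le_sup' (fun y => |v y|) (Finset.mem_univ y)
    have h1 : t * |v y| ≤ t * B := mul_le_mul_of_nonneg_left hvy ht0.le
    have h2 : t * B < c := by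
      rw [ht, div_mul_eq_mul_div, div_lt_iff₀ (by linarith : (0:ℝ) < 2 * (B + 1))]
      nlinarith
    linarith
  have hd : ∀ y, 1 < (π y)⁻¹ + t * v y := by
    intro y
    have h1 : c ≤ (π y)⁻¹ - 1 := Finset.inf'_le _ (Finset.mem_univ y)
    have h2 : -(t * |v y|) ≤ t * v y := by
      have := neg_abs_le (v y)
      nlinarith [abs_nonneg (v y)]
    have := hbound y
    linarith
  refine ⟨fun y => ((π y)⁻¹ + t * v y)⁻¹, ?_, ?_, ?_⟩
  · intro y
    have h1 := hd y
    constructor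
    · positivity
    · exact inv_lt_one_of_one_lt₀ h1
  · intro heq
    obtain ⟨y, hy⟩ := Function.ne_iff.mp hv0
    have := congrFun heq y
    have hπy := (hπ y).1
    have h1 := hd y
    have h2 : ((π y)⁻¹ + t * v y)⁻¹ = π y := this
    have h3 : (π y)⁻¹ + t * v y = (π y)⁻¹ := by
      have := congrArg (·⁻¹) h2
      simpa [inv_inv] using this
    have : t * v y = 0 := by linarith
    rcases mul_eq_zero.mp this with h | h
    · exact absurd h ht0.ne'
    · exact hy (by simpa using h)
  · intro z
    have : ∀ y, p y z / ((π y)⁻¹ + t * v y)⁻¹ = p y z / π y + t * (p y z * v y) := by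
      intro y
      have hπy := (hπ y).1
      rw [div_eq_mul_inv, inv_inv]
      field_simp
    rw [Finset.sum_congr rfl (fun y _ => this y), Finset.sum_add_distrib,
      ← Finset.mul_sum, hvz z]
    ring
end

section
/- Let $m_y, m_z \geq 1$ be integers and let $p : \{1,\dots,m_y\} \times \{1,\dots,m_z\} \to (0,1)$ be such that for each $z$, $(p(1\mid z),\dots,p(m_y\mid z))$ is a probability vector. Suppose the vectors $\{(p(1\mid z),\dots,p(m_y\mid z))\}_{z=1}^{m_z}$ span $\mathbb{R}^{m_y}$ (which forces $m_y \leq m_z$). If $\pi, \pi' : \{1,\dots,m_y\} \to (0,1)$ satisfy $\sum_{y=1}^{m_y} p(y\mid z)/\pi(y) = \sum_{y=1}^{m_y} p(y\mid z)/\pi'(y)$ for every $z \in \{1,\dots,m_z\}$, then $\pi = \pi'$. (This is the identifiability direction of Theorem 1: when $m_y \leq m_z$ and the respondents' outcome distributions are in general position, the response mechanism is identified.) -/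
/-- Theorem 1 (identifiability direction): if the respondents' outcome distributions
`(p(·∣z))_z` span `ℝ^{m_y}` (which forces `m_y ≤ m_z`), then two response mechanisms
producing the same observed-data distribution must coincide. -/
theorem identifiable_of_span
    (my mz : ℕ) (hmy : 1 ≤ my) (hmz : 1 ≤ mz)
    (p : Fin my → Fin mz → ℝ)
    (hp : ∀ y z, 0 < p y z ∧ p y z < 1)
    (hpsum : ∀ z : Fin mz, ∑ y, p y z = 1)
    (hspan : Submodule.span ℝ (Set.range (fun z : Fin mz => fun y : Fin my => p y z)) = ⊤)
    (π π' : Fin my → ℝ)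
    (hπ : ∀ y, 0 < π y ∧ π y < 1) (hπ' : ∀ y, 0 < π' y ∧ π' y < 1)
    (heq : ∀ z : Fin mz, ∑ y, p y z / π y = ∑ y, p y z / π' y) :
    π = π' := by
  set v : Fin my → ℝ := fun y => 1 / π y - 1 / π' y with hv
  let f : (Fin my → ℝ) →ₗ[ℝ] ℝ :=
    { toFun := fun w => ∑ y, w y * v y
      map_add' := by
        intro a b
        simp [add_mul, Finset.sum_add_distrib]
      map_smul' := by
        intro c a
        simp [Finset.mul_sum, mul_assoc] }
  have hker : Submodule.span ℝ
      (Set.range (fun z : Fin mz => fun y : Fin my => p y z)) ≤ LinearMap.ker f := by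
    rw [Submodule.span_le]
    rintro _ ⟨z, rfl⟩
    simp only [SetLike.mem_coe, LinearMap.mem_ker]
    have : ∑ y, p y z * v y = 0 := by
      have h := heq z
      simp only [hv, mul_sub]
      rw [Finset.sum_sub_distrib]
      have e1 : ∀ y : Fin my, p y z * (1 / π y) = p y z / π y := by
        intro y; ring
      have e2 : ∀ y : Fin my, p y z * (1 / π' y) = p y z / π' y := by
        intro y; ring
      simp only [e1, e2, h, sub_self]
    simpa [f] using this
  have hf0 : f = 0 := by
    apply LinearMap.ext
    intro w
    have : w ∈ LinearMap.ker f := by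
      have : (⊤ : Submodule ℝ (Fin my → ℝ)) ≤ LinearMap.ker f := hspan ▸ hker
      exact this trivial
    simpa using this
  have hv0 : ∀ y, v y = 0 := by
    intro y
    have := congrArg (fun g => g (Pi.single y 1)) hf0
    simpa [f, Pi.single_apply, Finset.sum_ite_eq', mul_comm] using this
  funext y
  have h1 : (1 : ℝ) / π y = 1 / π' y := by
    have := hv0 y
    simp only [hv] at this
    linarith
  have := (hπ y).1.ne'
  have := (hπ' y).1.ne'
  field_simp at h1
  linarith
end

section
/- Let $z$ take values in $\{1,2\}$ and $y$ in $\{1,2,3\}$, with respondents' outcome probabilities $p_1(1\mid 1)=p_1(2\mid 2)=0.4$, $p_1(1\mid 2)=p_1(2\mid 1)=0.2$, and $p_1(3\mid 1)=p_1(3\mid 2)=0.4$. Consider the two response mechanisms (i) $\pi(1)=\pi(2)=\pi(3)=1/2$ and (ii) $\pi'(1)=\pi'(2)=2/3$, $\pi'(3)=4/11$. Then for each $z \in \{1,2\}$, $\sum_{y=1}^{3} p_1(y\mid z)/\pi(y) = \sum_{y=1}^{3} p_1(y\mid z)/\pi'(y) = 2$, so the two distinct models produce the same observed-data likelihood. 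-/
/-- Example: a binary instrument `z ∈ {1,2}` and ternary outcome `y ∈ {1,2,3}` with
the displayed respondents' outcome probabilities, together with the two response
mechanisms `π = (1/2,1/2,1/2)` and `π' = (2/3,2/3,4/11)`, give the same observed-data
likelihood: both normalizing sums equal `2` for each value of `z`, yet `π ≠ π'`. -/
theorem categorical_counterexample :
    let p : Fin 3 → Fin 2 → ℝ := ![![0.4, 0.2], ![0.2, 0.4], ![0.4, 0.4]]
    let π : Fin 3 → ℝ := ![1/2, 1/2, 1/2]
    let π' : Fin 3 → ℝ := ![2/3, 2/3, 4/11]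
    π ≠ π' ∧
      ∀ z : Fin 2, (∑ y, p y z / π y = 2) ∧ (∑ y, p y z / π' y = 2) := by
  intro p π π'
  refine ⟨fun h => by norm_num [π, π'] at h, fun z => ?_⟩
  -- For both `z`, `p 0 z + p 1 z = 0.6` and `p 2 z = 0.4`; `π'` is chosen so that
  -- `0.6 * 3/2 + 0.4 * 11/4 = 2`, matching `(0.6 + 0.4) * 2`.
  fin_cases z <;> norm_num [p, π, π', Fin.sum_univ_succ]
end

section
/- Let $\Psi : \mathbb{R} \to (0,1]$ be strictly monotone and $m : \mathbb{R} \to \mathbb{R}$ be a continuous strictly monotone surjection. Let $p_1, p_2 : \mathbb{R} \to (0,\infty)$ be probability density functions (with respect to Lebesgue measure) such that the ratio $y \mapsto p_2(y)/p_1(y)$ is monotone and $p_1 \neq p_2$ on a set of positive Lebesgue measure. Let $\alpha, \alpha', \beta, \beta' \in \mathbb{R}$ and suppose all four integrals $\int_{\mathbb{R}} p_i(y)/\Psi(\alpha + \beta m(y))\,dy$ and $\int_{\mathbb{R}} p_i(y)/\Psi(\alpha' + \beta' m(y))\,dy$ ($i=1,2$) are finite. If $\int_{\mathbb{R}} p_i(y)/\Psi(\alpha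 + \beta m(y))\,dy = \int_{\mathbb{R}} p_i(y)/\Psi(\alpha' + \beta' m(y))\,dy$ for both $i = 1$ and $i = 2$, then $\alpha = \alpha'$ and $\beta = \beta'$. (This is the analytic core of Theorem 2: the response-mechanism parameters are identified by an instrument whose respondents' outcome distributions have the monotone likelihood ratio property.) -/
set_option maxHeartbeats 1000000

open MeasureTheory

private lemma pm_mul {a b : ℝ} (ha : a = 1 ∨ a = -1) (hb : b = 1 ∨ b = -1) :
    a * b = 1 ∨ a * b = -1 := by
  rcases ha with rfl | rfl <;> rcases hb with rfl | rfl <;> norm_num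

private lemma pm_ne_zero {a : ℝ} (ha : a = 1 ∨ a = -1) : a ≠ 0 := by
  rcases ha with rfl | rfl <;> norm_num

private lemma sgn_exists {F : ℝ → ℝ} (hF : StrictMono F ∨ StrictAnti F) :
    ∃ ε : ℝ, (ε = 1 ∨ ε = -1) ∧ ∀ a b : ℝ, a < b → 0 < ε * (F b - F a) := by
  rcases hF with h | h
  · exact ⟨1, Or.inl rfl, fun a b hab => by have := h hab; nlinarith⟩
  · exact ⟨-1, Or.inr rfl, fun a b hab => by have := h hab; nlinarith⟩

private lemma sgn_neg {F : ℝ → ℝ} {εF : ℝ}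
    (hεF : ∀ a b : ℝ, a < b → 0 < εF * (F b - F a))
    {ε : ℝ} (hε : ε = 1 ∨ ε = -1) {a b : ℝ} (h : ε * (a - b) < 0) :
    εF * ε * (F a - F b) < 0 := by
  rcases hε with rfl | rfl
  · have hab : a < b := by linarith
    have := hεF a b hab; nlinarith
  · have hab : b < a := by nlinarith
    have := hεF b a hab; nlinarith

private lemma sgn_pos {F : ℝ → ℝ} {εF : ℝ}
    (hεF : ∀ a b : ℝ, a < b → 0 < εF * (F b - F a))
    {ε : ℝ} (hε : ε = 1 ∨ ε = -1) {a b : ℝ} (h : 0 < ε * (a - b)) :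
    0 < εF * ε * (F a - F b) := by
  rcases hε with rfl | rfl
  · have hab : b < a := by linarith
    have := hεF b a hab; nlinarith
  · have hab : a < b := by nlinarith
    have := hεF a b hab; nlinarith

/-- Analytic core of Theorem 2: with a strictly monotone link `Ψ : ℝ → (0,1]`, a
continuous strictly monotone surjection `m`, and two respondents' outcome densities
`p₁, p₂` with a monotone likelihood ratio that differ on a set of positive measure,
equality of the normalizing integrals under parameters `(α,β)` and `(α',β')` forces
`α = α'` and `β = β'`. -/
theorem response_parameters_identified
    (Ψ : ℝ → ℝ) (hΨrange : ∀ x, 0 < Ψ x ∧ Ψ x ≤ 1)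
    (hΨmono : StrictMono Ψ ∨ StrictAnti Ψ)
    (m : ℝ → ℝ) (hmcont : Continuous m)
    (hmmono : StrictMono m ∨ StrictAnti m)
    (hmsurj : Function.Surjective m)
    (p₁ p₂ : ℝ → ℝ) (hp₁pos : ∀ y, 0 < p₁ y) (hp₂pos : ∀ y, 0 < p₂ y)
    (hp₁int : Integrable p₁) (hp₂int : Integrable p₂)
    (hp₁den : ∫ y, p₁ y = 1) (hp₂den : ∫ y, p₂ y = 1)
    (hratio : Monotone (fun y => p₂ y / p₁ y) ∨ Antitone (fun y => p₂ y / p₁ y))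
    (hneq : volume {y | p₁ y ≠ p₂ y} ≠ 0)
    (α α' β β' : ℝ)
    (hfin₁ : Integrable (fun y => p₁ y / Ψ (α + β * m y)))
    (hfin₁' : Integrable (fun y => p₁ y / Ψ (α' + β' * m y)))
    (hfin₂ : Integrable (fun y => p₂ y / Ψ (α + β * m y)))
    (hfin₂' : Integrable (fun y => p₂ y / Ψ (α' + β' * m y)))
    (heq₁ : ∫ y, p₁ y / Ψ (α + β * m y) = ∫ y, p₁ y / Ψ (α' + β' * m y))
    (heq₂ : ∫ y, p₂ y / Ψ (α + β * m y) = ∫ y, p₂ y / Ψ (α' + β' * m y)) :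
    α = α' ∧ β = β' := by
  classical
  -- the reciprocal link
  set F : ℝ → ℝ := fun t => 1 / Ψ t with hFdef
  have hF : StrictMono F ∨ StrictAnti F := by
    rcases hΨmono with h | h
    · exact Or.inr (fun a b hab => one_div_lt_one_div_of_lt (hΨrange a).1 (h hab))
    · exact Or.inl (fun a b hab => one_div_lt_one_div_of_lt (hΨrange b).1 (h hab))
  obtain ⟨εF, hεF1, hεF⟩ := sgn_exists hF
  obtain ⟨εm, hεm1, hεm⟩ := sgn_exists hmmono
  have hΨne : ∀ x, Ψ x ≠ 0 := fun x => ne_of_gt (hΨrange x).1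
  set g : ℝ → ℝ := fun y => F (α + β * m y) - F (α' + β' * m y) with hgdef
  have h₁int : Integrable (fun y => p₁ y * g y) := by
    apply (hfin₁.sub hfin₁').congr
    filter_upwards with y
    simp only [Pi.sub_apply, hgdef, hFdef]; ring
  have h₂int : Integrable (fun y => p₂ y * g y) := by
    apply (hfin₂.sub hfin₂').congr
    filter_upwards with y
    simp only [Pi.sub_apply, hgdef, hFdef]; ring
  have h₁0 : ∫ y, p₁ y * g y = 0 := by
    have e : ∫ y, p₁ y * g y
        = (∫ y, p₁ y / Ψ (α + β * m y)) - ∫ y, p₁ y / Ψ (α' + β' * m y) := by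
      rw [← integral_sub hfin₁ hfin₁']
      apply integral_congr_ae
      filter_upwards with y
      simp only [Pi.sub_apply, hgdef, hFdef]; ring
    rw [e, heq₁, sub_self]
  have h₂0 : ∫ y, p₂ y * g y = 0 := by
    have e : ∫ y, p₂ y * g y
        = (∫ y, p₂ y / Ψ (α + β * m y)) - ∫ y, p₂ y / Ψ (α' + β' * m y) := by
      rw [← integral_sub hfin₂ hfin₂']
      apply integral_congr_ae
      filter_upwards with y
      simp only [Pi.sub_apply, hgdef, hFdef]; ring
    rw [e, heq₂, sub_self]
  by_cases hb : β = β'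
  · subst hb
    refine ⟨?_, rfl⟩
    by_contra ha
    obtain ⟨εa, hεa1, hεa⟩ : ∃ ε : ℝ, (ε = 1 ∨ ε = -1) ∧ 0 < ε * (α - α') := by
      rcases lt_or_gt_of_ne ha with h | h
      · exact ⟨-1, Or.inr rfl, by nlinarith⟩
      · exact ⟨1, Or.inl rfl, by nlinarith⟩
    have hg : ∀ y, 0 < (εF * εa) * g y := by
      intro y
      have h1 : 0 < εa * ((α + β * m y) - (α' + β * m y)) := by
        have e : (α + β * m y) - (α' + β * m y) = α - α' := by ring
        rw [e]; exact hεa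
      have := sgn_pos hεF hεa1 h1
      simp only [hgdef]
      nlinarith [this]
    have hfpos : ∀ y, 0 < (εF * εa) * (p₁ y * g y) := by
      intro y
      have := hg y; have := hp₁pos y; nlinarith
    have hint : Integrable (fun y => (εF * εa) * (p₁ y * g y)) := h₁int.const_mul _
    have h0 : ∫ y, (εF * εa) * (p₁ y * g y) = 0 := by
      rw [integral_const_mul, h₁0, mul_zero]
    have hpos : 0 < ∫ y, (εF * εa) * (p₁ y * g y) := by
      rw [integral_pos_iff_support_of_nonneg (fun y => (hfpos y).le) hint]
      have hs : Function.support (fun y => (εF * εa) * (p₁ y * g y)) = Set.univ := by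
        ext y
        simp only [Function.mem_support, Set.mem_univ, iff_true]
        exact ne_of_gt (hfpos y)
      rw [hs, Real.volume_univ]
      exact ENNReal.zero_lt_top
    rw [h0] at hpos
    exact lt_irrefl 0 hpos
  · exfalso
    set d : ℝ := β' - β with hd
    have hdne : d ≠ 0 := sub_ne_zero.mpr (Ne.symm hb)
    obtain ⟨εd, hεd1, hεd⟩ : ∃ ε : ℝ, (ε = 1 ∨ ε = -1) ∧ 0 < ε * d := by
      rcases hdne.lt_or_gt with h | h
      · exact ⟨-1, Or.inr rfl, by nlinarith⟩
      · exact ⟨1, Or.inl rfl, by nlinarith⟩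
    set t₀ : ℝ := (α - α') / d with ht₀
    obtain ⟨y₀, hy₀⟩ := hmsurj t₀
    have hdt : d * t₀ = α - α' := by
      rw [ht₀]; field_simp
    have hAB : ∀ y, (α + β * m y) - (α' + β' * m y) = d * t₀ - d * m y := by
      intro y
      linear_combination (-1 : ℝ) * hdt + (m y) * hd
  -- g vanishes at y₀
    have hg0 : g y₀ = 0 := by
      have hkey : α + β * m y₀ = α' + β' * m y₀ := by
        have := hAB y₀
        rw [hy₀] at this ⊢
        linarith [this]
      simp only [hgdef, hkey, sub_self]
    set τ : ℝ := -(εF * (εd * εm)) with hτ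
    have hτ1 : τ = 1 ∨ τ = -1 := by
      rw [hτ]
      rcases pm_mul hεF1 (pm_mul hεd1 hεm1) with h | h
      · right; rw [h]
      · left; rw [h]; ring
    have hgpos : ∀ y, y₀ < y → 0 < τ * g y := by
      intro y hy
      have h1 : 0 < εm * (m y - t₀) := by
        have := hεm y₀ y hy; rw [hy₀] at this; linarith [this]
      have h2 : (εd * εm) * ((α + β * m y) - (α' + β' * m y)) < 0 := by
        rw [hAB y]
        nlinarith [mul_pos hεd h1]
      have h3 := sgn_neg hεF (pm_mul hεd1 hεm1) h2
      rw [hτ]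
      simp only [hgdef]
      nlinarith [h3]
    have hgneg : ∀ y, y < y₀ → τ * g y < 0 := by
      intro y hy
      have h1 : εm * (m y - t₀) < 0 := by
        have := hεm y y₀ hy; rw [hy₀] at this; nlinarith [this]
      have h2 : 0 < (εd * εm) * ((α + β * m y) - (α' + β' * m y)) := by
        rw [hAB y]
        nlinarith [mul_pos hεd (neg_pos.mpr h1)]
      have h3 := sgn_pos hεF (pm_mul hεd1 hεm1) h2
      rw [hτ]
      simp only [hgdef]
      nlinarith [h3]
    set r₀ : ℝ := p₂ y₀ / p₁ y₀ with hr₀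
    obtain ⟨σ, hσ1, hσge, hσle⟩ : ∃ σ : ℝ, (σ = 1 ∨ σ = -1) ∧
        (∀ y, y₀ ≤ y → 0 ≤ σ * (p₂ y / p₁ y - r₀)) ∧
        (∀ y, y ≤ y₀ → σ * (p₂ y / p₁ y - r₀) ≤ 0) := by
      rcases hratio with h | h
      · refine ⟨1, Or.inl rfl, fun y hy => ?_, fun y hy => ?_⟩
        · have := h hy; dsimp only at this; rw [hr₀]; nlinarith [this]
        · have := h hy; dsimp only at this; rw [hr₀]; nlinarith [this]
      · refine ⟨-1, Or.inr rfl, fun y hy => ?_, fun y hy => ?_⟩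
        · have := h hy; dsimp only at this; rw [hr₀]; nlinarith [this]
        · have := h hy; dsimp only at this; rw [hr₀]; nlinarith [this]
    set Hf : ℝ → ℝ := fun y => (τ * σ) * ((p₂ y - r₀ * p₁ y) * g y) with hHf
    have hHnonneg : (0 : ℝ → ℝ) ≤ Hf := by
      intro y
      have hp := hp₁pos y
      have hfact : p₂ y - r₀ * p₁ y = (p₂ y / p₁ y - r₀) * p₁ y := by
        field_simp
      rcases lt_trichotomy y y₀ with hlt | hE | hgt
      · have h1 := hgneg y hlt
        have h2 := hσle y hlt.le
        have h3 : 0 ≤ (σ * (p₂ y / p₁ y - r₀)) * (τ * g y) :=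
          mul_nonneg_of_nonpos_of_nonpos h2 h1.le
        simp only [Pi.zero_apply, hHf]
        rw [hfact]
        nlinarith [mul_nonneg h3 hp.le, pm_mul hσ1 hσ1, pm_mul hτ1 hτ1]
      · simp only [Pi.zero_apply, hHf, hE, hg0, mul_zero]
        exact le_refl 0
      · have h1 := hgpos y hgt
        have h2 := hσge y hgt.le
        have h3 : 0 ≤ (σ * (p₂ y / p₁ y - r₀)) * (τ * g y) :=
          mul_nonneg h2 h1.le
        simp only [Pi.zero_apply, hHf]
        rw [hfact]
        nlinarith [mul_nonneg h3 hp.le, pm_mul hσ1 hσ1, pm_mul hτ1 hτ1]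
    have hHint : Integrable Hf := by
      apply ((h₂int.const_mul (τ * σ)).sub (h₁int.const_mul (τ * σ * r₀))).congr
      filter_upwards with y
      simp only [Pi.sub_apply, hHf, hgdef, hFdef]; ring
    have hH0 : ∫ y, Hf y = 0 := by
      have e : ∫ y, Hf y
          = (∫ y, (τ * σ) * (p₂ y * g y)) - ∫ y, (τ * σ * r₀) * (p₁ y * g y) := by
        rw [← integral_sub (h₂int.const_mul _) (h₁int.const_mul _)]
        apply integral_congr_ae
        filter_upwards with y
        simp only [Pi.sub_apply, hHf, hgdef, hFdef]; ring
      rw [e, integral_const_mul, integral_const_mul, h₁0, h₂0, mul_zero, mul_zero, sub_self]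
    have hae : Hf =ᵐ[volume] 0 :=
      (integral_eq_zero_iff_of_nonneg hHnonneg hHint).mp hH0
    have hτσ : τ * σ ≠ 0 := mul_ne_zero (pm_ne_zero hτ1) (pm_ne_zero hσ1)
    have hae2 : ∀ᵐ y, p₂ y = r₀ * p₁ y := by
      have hne : ∀ᵐ (y : ℝ) ∂(volume : Measure ℝ), y ≠ y₀ := by
        rw [ae_iff]
        have : {y : ℝ | ¬ y ≠ y₀} = {y₀} := by ext y; simp
        rw [this]
        exact measure_singleton y₀
      filter_upwards [hae, hne] with y h0 hy
      simp only [Pi.zero_apply, hHf] at h0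
      have hgne : g y ≠ 0 := by
        intro hz
        rcases hy.lt_or_gt with h | h
        · have := hgneg y h; rw [hz, mul_zero] at this; exact lt_irrefl 0 this
        · have := hgpos y h; rw [hz, mul_zero] at this; exact lt_irrefl 0 this
      have h0' : (p₂ y - r₀ * p₁ y) * g y = 0 := by
        rcases mul_eq_zero.mp h0 with h | h
        · exact absurd h hτσ
        · exact h
      have h0'' : p₂ y - r₀ * p₁ y = 0 := by
        rcases mul_eq_zero.mp h0' with h | h
        · exact h
        · exact absurd h hgne
      linarith
    have hr1 : r₀ = 1 := by
      have e2 : ∫ y, p₂ y = ∫ y, r₀ * p₁ y := by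
        apply integral_congr_ae
        filter_upwards [hae2] with y h
        exact h
      rw [hp₂den, integral_const_mul, hp₁den, mul_one] at e2
      exact e2.symm
    apply hneq
    have hfin : ∀ᵐ y, p₁ y = p₂ y := by
      filter_upwards [hae2] with y h
      rw [hr1, one_mul] at h
      exact h.symm
    exact ae_iff.mp hfin
end

section
/- Let $p_1, p_2 : \mathbb{R} \to (0,\infty)$ be probability density functions with respect to Lebesgue measure such that $g(y) = p_2(y)/p_1(y)$ is monotone increasing. Let $y^* \in \mathbb{R}$ and let $K : \mathbb{R} \to \mathbb{R}$ be measurable with $K(y) < 0$ for $y < y^*$ and $K(y) > 0$ for $y > y^*$, and suppose $K p_1$ and $K p_2$ are Lebesgue integrable. If $\int_{\mathbb{R}} K(y)\, p_1(y)\, dy = 0$ and $\int_{\mathbb{R}} K(y)\, p_2(y)\, dy = 0$, then $p_2(y)/p_1(y)$ is constant Lebesgue-almost everywhere, i.e. $p_1 = p_2$ almost everywhere. -/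
open MeasureTheory

/-- Step II of the proof of Theorem 2: a function `K` with a single sign change at `y*`
cannot integrate to zero against both of two positive densities `p₁, p₂` whose
likelihood ratio `p₂/p₁` is monotone increasing, unless the densities agree almost
everywhere. -/
theorem single_sign_change_forces_equal_densities
    (p₁ p₂ : ℝ → ℝ) (hp₁pos : ∀ y, 0 < p₁ y) (hp₂pos : ∀ y, 0 < p₂ y)
    (hp₁int : Integrable p₁) (hp₂int : Integrable p₂)
    (hp₁den : ∫ y, p₁ y = 1) (hp₂den : ∫ y, p₂ y = 1)
    (hmono : Monotone (fun y => p₂ y / p₁ y))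
    (ystar : ℝ) (K : ℝ → ℝ) (hKmeas : Measurable K)
    (hKneg : ∀ y, y < ystar → K y < 0)
    (hKpos : ∀ y, ystar < y → 0 < K y)
    (hKp₁int : Integrable (fun y => K y * p₁ y))
    (hKp₂int : Integrable (fun y => K y * p₂ y))
    (h₁ : ∫ y, K y * p₁ y = 0)
    (h₂ : ∫ y, K y * p₂ y = 0) :
    p₁ =ᵐ[volume] p₂ := by
  set c := p₂ ystar / p₁ ystar with hc
  set h : ℝ → ℝ := fun y => K y * p₂ y - c * (K y * p₁ y) with hh
  have hkey : ∀ y, p₂ y - c * p₁ y = p₁ y * (p₂ y / p₁ y - c) := by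
    intro y
    have h0 : p₁ y ≠ 0 := (hp₁pos y).ne'
    field_simp
  have hnonneg : ∀ y, 0 ≤ h y := by
    intro y
    have : h y = K y * (p₂ y - c * p₁ y) := by ring
    rw [this, hkey y]
    rcases lt_trichotomy y ystar with hy | hy | hy
    · have hK := hKneg y hy
      have hg : p₂ y / p₁ y - c ≤ 0 := sub_nonpos.mpr (hmono hy.le)
      have := mul_nonpos_of_nonneg_of_nonpos (hp₁pos y).le hg
      nlinarith
    · subst hy; simp [hc]
    · have hK := hKpos y hy
      have hg : 0 ≤ p₂ y / p₁ y - c := sub_nonneg.mpr (hmono hy.le)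
      exact mul_nonneg hK.le (mul_nonneg (hp₁pos y).le hg)
  have hint : Integrable h := hKp₂int.sub (hKp₁int.const_mul c)
  have hzero : ∫ y, h y = 0 := by
    rw [hh]
    rw [integral_sub hKp₂int (hKp₁int.const_mul c), integral_const_mul, h₁, h₂]
    ring
  have hae0 : h =ᵐ[volume] 0 := by
    have := (integral_eq_zero_iff_of_nonneg hnonneg hint).mp hzero
    exact this
  have hsingle : (volume : Measure ℝ) {ystar} = 0 := Real.volume_singleton
  have haec : ∀ᵐ y ∂(volume : Measure ℝ), p₂ y = c * p₁ y := by
    filter_upwards [hae0, compl_mem_ae_iff.mpr hsingle] with y hy hy'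
    have hyne : y ≠ ystar := hy'
    have hKne : K y ≠ 0 := by
      rcases lt_or_gt_of_ne hyne with h' | h'
      · exact (hKneg y h').ne
      · exact (hKpos y h').ne'
    have : K y * (p₂ y - c * p₁ y) = 0 := by
      have := hy
      simp only [hh, Pi.zero_apply] at this
      linarith [this]
    have := (mul_eq_zero.mp this).resolve_left hKne
    linarith
  have hc1 : c = 1 := by
    have : ∫ y, p₂ y = ∫ y, c * p₁ y := integral_congr_ae haec
    rw [integral_const_mul, hp₁den] at this
    rw [hp₂den] at this
    linarith
  filter_upwards [haec] with y hy
  rw [hy, hc1, one_mul]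
end

section
/- Let $\Psi : \mathbb{R} \to (0,1]$ be strictly monotone increasing and suppose there exists $s \in (0,2)$ such that $\liminf_{z \to -\infty} \Psi(z)\, e^{|z|^s} > 0$. Then for every $\mu \in \mathbb{R}$, $\sigma > 0$, and $\alpha, \beta \in \mathbb{R}$, the integral $\int_{\mathbb{R}} \frac{1}{\sqrt{2\pi}\sigma} \exp\left(-\frac{(y-\mu)^2}{2\sigma^2}\right) \frac{1}{\Psi(\alpha + \beta y)}\, dy$ is finite. (Proposition 1: a normal respondents' outcome model together with the sub-Gaussian lower-tail condition on $\Psi$ satisfies the integrability condition (C7).) -/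
open MeasureTheory Filter

/-- For `0 < s < 2` and any `ε > 0` there is a constant `C ≥ 0` with
`t ^ s ≤ ε * t ^ 2 + C` for all `t ≥ 0`. -/
lemma rpow_le_eps_mul_sq_add_const {s : ℝ} (hs0 : 0 < s) (hs2 : s < 2) {ε : ℝ} (hε : 0 < ε) :
    ∃ C : ℝ, 0 ≤ C ∧ ∀ t : ℝ, 0 ≤ t → t ^ s ≤ ε * t ^ 2 + C := by
  have h2s : (0:ℝ) < 2 - s := by linarith
  set T : ℝ := ε⁻¹ ^ (1 / (2 - s)) with hTdef
  have hT : 0 < T := Real.rpow_pos_of_pos (inv_pos.2 hε) _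
  refine ⟨T ^ s, Real.rpow_nonneg hT.le s, fun t ht => ?_⟩
  rcases le_or_gt t T with h | h
  · have h1 : t ^ s ≤ T ^ s := Real.rpow_le_rpow ht h hs0.le
    nlinarith [mul_nonneg hε.le (sq_nonneg t)]
  · have ht0 : 0 < t := hT.trans h
    have hTpow : T ^ (2 - s) = ε⁻¹ := by
      rw [hTdef, ← Real.rpow_mul (inv_pos.2 hε).le, one_div,
        inv_mul_cancel₀ h2s.ne', Real.rpow_one]
    have h1 : ε⁻¹ ≤ t ^ (2 - s) := by
      rw [← hTpow]; exact Real.rpow_le_rpow hT.le h.le h2s.le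
    have h2 : t ^ s * t ^ (2 - s) = t ^ 2 := by
      rw [← Real.rpow_add ht0, ← Real.rpow_two]
      norm_num
    have h3 : t ^ s * ε⁻¹ ≤ t ^ 2 := by
      calc t ^ s * ε⁻¹ ≤ t ^ s * t ^ (2 - s) :=
            mul_le_mul_of_nonneg_left h1 (Real.rpow_nonneg ht0.le s)
        _ = t ^ 2 := h2
    have h4 : t ^ s ≤ t ^ 2 * ε := by
      rw [← div_le_iff₀ hε]
      rwa [div_eq_mul_inv]
    have hTs : 0 ≤ T ^ s := Real.rpow_nonneg hT.le s
    nlinarith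

/-- Proposition 1: if the strictly increasing link `Ψ : ℝ → (0,1]` satisfies the
lower-tail condition `liminf_{z→-∞} Ψ(z) e^{|z|^s} > 0` for some `s ∈ (0,2)`, then the
normal respondents' outcome model satisfies the integrability condition (C7): for any
mean `μ`, standard deviation `σ > 0`, and any `α, β`, the integral
`∫ N(μ,σ²)(y) / Ψ(α + β y) dy` is finite. -/
theorem normal_outcome_integrable
    (Ψ : ℝ → ℝ) (hΨrange : ∀ x, 0 < Ψ x ∧ Ψ x ≤ 1) (hΨmono : StrictMono Ψ)
    (s : ℝ) (hs : s ∈ Set.Ioo (0 : ℝ) 2)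
    (htail : 0 < liminf (fun z => Ψ z * Real.exp (|z| ^ s)) atBot)
    (μ : ℝ) (σ : ℝ) (hσ : 0 < σ) (α β : ℝ) :
    Integrable (fun y =>
      (Real.sqrt (2 * Real.pi) * σ)⁻¹ * Real.exp (-(y - μ) ^ 2 / (2 * σ ^ 2)) /
        Ψ (α + β * y)) := by
  obtain ⟨hs0, hs2⟩ := hs
  set l := liminf (fun z => Ψ z * Real.exp (|z| ^ s)) atBot with hl
  -- step 1: extract tail constant
  have hc : (0:ℝ) < l / 2 := by linarith
  have hev : ∀ᶠ z in atBot, l / 2 < Ψ z * Real.exp (|z| ^ s) := by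
    exact Filter.eventually_lt_of_lt_liminf (by linarith)
      (Filter.isBoundedUnder_of ⟨0, fun z =>
        mul_nonneg (hΨrange z).1.le (Real.exp_pos _).le⟩)
  obtain ⟨M, hM⟩ := Filter.eventually_atBot.1 hev
  set c : ℝ := l / 2 with hcdef
  -- step 2: global bound on (Ψ z)⁻¹
  set K : ℝ := max c⁻¹ (Ψ M)⁻¹ with hKdef
  have hK0 : 0 < K := lt_max_of_lt_left (inv_pos.2 hc)
  have hK : ∀ z : ℝ, (Ψ z)⁻¹ ≤ K * Real.exp (|z| ^ s) := by
    intro z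
    have hΨz := (hΨrange z).1
    rcases le_or_gt z M with h | h
    · have h1 : c ≤ Ψ z * Real.exp (|z| ^ s) := (hM z h).le
      have h2 : c / Real.exp (|z| ^ s) ≤ Ψ z := (div_le_iff₀ (Real.exp_pos _)).2 h1
      have h3 : (Ψ z)⁻¹ ≤ (c / Real.exp (|z| ^ s))⁻¹ := by
        apply inv_anti₀ (by positivity) h2
      calc (Ψ z)⁻¹ ≤ (c / Real.exp (|z| ^ s))⁻¹ := h3
        _ = c⁻¹ * Real.exp (|z| ^ s) := by rw [inv_div, div_eq_mul_inv, mul_comm]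
        _ ≤ K * Real.exp (|z| ^ s) :=
            mul_le_mul_of_nonneg_right (le_max_left _ _) (Real.exp_pos _).le
    · have h1 : Ψ M ≤ Ψ z := hΨmono.monotone h.le
      have h2 : (Ψ z)⁻¹ ≤ (Ψ M)⁻¹ := inv_anti₀ (hΨrange M).1 h1
      have h3 : (1:ℝ) ≤ Real.exp (|z| ^ s) :=
        Real.one_le_exp (Real.rpow_nonneg (abs_nonneg z) s)
      calc (Ψ z)⁻¹ ≤ (Ψ M)⁻¹ := h2
        _ ≤ K := le_max_right _ _
        _ = K * 1 := (mul_one K).symm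
        _ ≤ K * Real.exp (|z| ^ s) := mul_le_mul_of_nonneg_left h3 hK0.le
  -- step 3: choose ε and C
  set a : ℝ := (2 * σ ^ 2)⁻¹ with hadef
  have ha : 0 < a := by positivity
  set ε : ℝ := a / (2 * (β ^ 2 + 1)) with hεdef
  have hε : 0 < ε := by positivity
  have hεβ : ε * β ^ 2 ≤ a / 2 := by
    rw [hεdef, div_mul_eq_mul_div, div_le_div_iff₀ (by positivity) (by norm_num)]
    nlinarith [sq_nonneg β, ha.le]
  obtain ⟨C, hC0, hC⟩ := rpow_le_eps_mul_sq_add_const hs0 hs2 hε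
  -- step 4: dominating gaussian
  set L : ℝ := 2 * a * μ + 2 * ε * α * β with hLdef
  set A : ℝ := (Real.sqrt (2 * Real.pi) * σ)⁻¹ * K * Real.exp (ε * α ^ 2 + C - a * μ ^ 2)
    with hAdef
  have hA0 : 0 < A := by positivity
  have hg : Integrable (fun y : ℝ => A * Real.exp (-(a / 2) * y ^ 2 + L * y)) := by
    have key : ∀ y : ℝ, -(a / 2) * y ^ 2 + L * y
        = L ^ 2 / (2 * a) + -(a / 2) * (y - L / a) ^ 2 := by
      intro y; field_simp; ring
    have h1 : Integrable (fun y : ℝ => Real.exp (-(a / 2) * (y - L / a) ^ 2)) :=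
      (integrable_exp_neg_mul_sq (half_pos ha)).comp_sub_right (L / a)
    have h2 := h1.const_mul (A * Real.exp (L ^ 2 / (2 * a)))
    exact h2.congr (Filter.Eventually.of_forall fun y => by
      simp only [key y, Real.exp_add]; ring)
  -- step 5: domination
  refine hg.mono' ?_ (Filter.Eventually.of_forall fun y => ?_)
  · apply Measurable.aestronglyMeasurable
    apply Measurable.div
    · exact (measurable_const.mul (((measurable_id.sub_const μ).pow_const 2).neg.div_const
        (2 * σ ^ 2)).exp)
    · exact hΨmono.monotone.measurable.comp (measurable_const.add
        (measurable_const.mul measurable_id))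
  · set z : ℝ := α + β * y with hzdef
    have hΨz := (hΨrange z).1
    have hfnn : 0 ≤ (Real.sqrt (2 * Real.pi) * σ)⁻¹ *
        Real.exp (-(y - μ) ^ 2 / (2 * σ ^ 2)) / Ψ z := by
      apply div_nonneg (by positivity) hΨz.le
    rw [Real.norm_eq_abs, abs_of_nonneg hfnn]
    have hzs : |z| ^ s ≤ ε * z ^ 2 + C := by
      have := hC |z| (abs_nonneg z)
      rwa [sq_abs] at this
    have hexp : -(y - μ) ^ 2 / (2 * σ ^ 2) + (ε * z ^ 2 + C)
        ≤ (ε * α ^ 2 + C - a * μ ^ 2) + (-(a / 2) * y ^ 2 + L * y) := by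
      have hE : -(y - μ) ^ 2 / (2 * σ ^ 2) = -(a * (y - μ) ^ 2) := by
        rw [hadef, div_eq_mul_inv]; ring
      rw [hE, hzdef, hLdef]
      have key : 0 ≤ (a / 2 - ε * β ^ 2) * y ^ 2 :=
        mul_nonneg (by linarith) (sq_nonneg y)
      nlinarith [key]
    calc (Real.sqrt (2 * Real.pi) * σ)⁻¹ * Real.exp (-(y - μ) ^ 2 / (2 * σ ^ 2)) / Ψ z
        = (Real.sqrt (2 * Real.pi) * σ)⁻¹ * Real.exp (-(y - μ) ^ 2 / (2 * σ ^ 2)) * (Ψ z)⁻¹ := by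
          rw [div_eq_mul_inv]
      _ ≤ (Real.sqrt (2 * Real.pi) * σ)⁻¹ * Real.exp (-(y - μ) ^ 2 / (2 * σ ^ 2)) *
          (K * Real.exp (|z| ^ s)) := by
          apply mul_le_mul_of_nonneg_left (hK z) (by positivity)
      _ ≤ (Real.sqrt (2 * Real.pi) * σ)⁻¹ * Real.exp (-(y - μ) ^ 2 / (2 * σ ^ 2)) *
          (K * Real.exp (ε * z ^ 2 + C)) := by
          apply mul_le_mul_of_nonneg_left _ (by positivity)
          exact mul_le_mul_of_nonneg_left (Real.exp_le_exp.2 hzs) hK0.le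
      _ = (Real.sqrt (2 * Real.pi) * σ)⁻¹ * K *
          Real.exp (-(y - μ) ^ 2 / (2 * σ ^ 2) + (ε * z ^ 2 + C)) := by
          rw [Real.exp_add (-(y - μ) ^ 2 / (2 * σ ^ 2)) (ε * z ^ 2 + C)]; ring
      _ ≤ (Real.sqrt (2 * Real.pi) * σ)⁻¹ * K *
          Real.exp ((ε * α ^ 2 + C - a * μ ^ 2) + (-(a / 2) * y ^ 2 + L * y)) := by
          apply mul_le_mul_of_nonneg_left (Real.exp_le_exp.2 hexp) (by positivity)
      _ = A * Real.exp (-(a / 2) * y ^ 2 + L * y) := by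
          rw [hAdef, Real.exp_add (ε * α ^ 2 + C - a * μ ^ 2) (-(a / 2) * y ^ 2 + L * y)]; ring
end

section
/- Define $h(u,y) = 1 + y - u - (y-u)^2$. For every $u \in \mathbb{R}$ and every $z \in \{0,1\}$, the expectation of $h(u,\cdot)$ under the normal distribution $N(u+z, 1)$ is zero: $\int_{\mathbb{R}} \left(1 + y - u - (y-u)^2\right) \frac{1}{\sqrt{2\pi}} e^{-(y-u-z)^2/2}\, dy = 0$. However, $h(u,\cdot)$ is not Lebesgue-almost-everywhere zero. Hence the family $\{N(u+z,1) : z \in \{0,1\}\}$ does not satisfy the completeness condition. -/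
/-! Centring the `N(u + z, 1)` variable at its mean, `y - u = (y - (u + z)) + z` turns `h(u, ·)`
into a quadratic in `y - (u + z)` whose Gaussian expectation is `1 + z - z² - 1 = z (1 - z)`,
which vanishes for `z ∈ {0, 1}`. On the other hand `h(u, ·)` is continuous with `h(u, u) = 1`,
and a continuous function that vanishes almost everywhere vanishes everywhere. -/

open MeasureTheory ProbabilityTheory Real

namespace ProbabilityTheory

variable {m : ℝ} {v : NNReal}

lemma integrable_id_gaussianReal : Integrable (fun x ↦ x) (gaussianReal m v) :=
  (memLp_id_gaussianReal 1).integrable le_rfl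

lemma integrable_sub_gaussianReal : Integrable (fun x ↦ x - m) (gaussianReal m v) :=
  integrable_id_gaussianReal.sub (integrable_const m)

lemma integrable_sub_sq_gaussianReal : Integrable (fun x ↦ (x - m) ^ 2) (gaussianReal m v) :=
  ((memLp_id_gaussianReal 2).sub (memLp_const m)).integrable_sq

lemma integral_sub_gaussianReal : ∫ x, (x - m) ∂gaussianReal m v = 0 := by
  rw [integral_sub integrable_id_gaussianReal (integrable_const m)]
  simp [integral_id_gaussianReal]

lemma integral_sub_sq_gaussianReal : ∫ x, (x - m) ^ 2 ∂gaussianReal m v = v := by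
  have := variance_eq_integral (μ := gaussianReal m v) (X := fun x ↦ x) aemeasurable_id
  rw [variance_fun_id_gaussianReal, integral_id_gaussianReal] at this
  exact this.symm

lemma integral_quadratic_gaussianReal (a b c : ℝ) :
    ∫ x, (a + b * (x - m) + c * (x - m) ^ 2) ∂gaussianReal m v = a + c * v := by
  have hlin : Integrable (fun x ↦ a + b * (x - m)) (gaussianReal m v) :=
    (integrable_const a).add (integrable_sub_gaussianReal.const_mul b)
  rw [integral_add hlin (integrable_sub_sq_gaussianReal.const_mul c),
    integral_add (integrable_const a) (integrable_sub_gaussianReal.const_mul b),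
    integral_const_mul, integral_const_mul, integral_sub_gaussianReal,
    integral_sub_sq_gaussianReal]
  simp

end ProbabilityTheory

/-- Example 2 (failure of completeness with a binary instrument): the nonzero function
`h(u,y) = 1 + y - u - (y-u)²` integrates to zero against the `N(u+z,1)` density for
both `z = 0` and `z = 1`, yet `h(u,·)` is not almost everywhere zero. Hence the family
`{N(u+z,1) : z ∈ {0,1}}` is not complete. -/
theorem completeness_fails_binary_instrument
    (h : ℝ → ℝ → ℝ) (hh : ∀ u y, h u y = 1 + y - u - (y - u) ^ 2) :
    (∀ u : ℝ, ∀ z : ℝ, z = 0 ∨ z = 1 →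
      ∫ y, h u y *
        ((Real.sqrt (2 * Real.pi))⁻¹ * Real.exp (-(y - u - z) ^ 2 / 2)) = 0) ∧
    (∀ u : ℝ, ¬ (fun y => h u y) =ᵐ[volume] (fun _ => (0 : ℝ))) := by
  constructor
  · intro u z hz
    calc ∫ y, h u y * ((√(2 * π))⁻¹ * rexp (-(y - u - z) ^ 2 / 2))
        = ∫ y, ((1 + z - z ^ 2) + (1 - 2 * z) * (y - (u + z)) + (-1) * (y - (u + z)) ^ 2)
            ∂gaussianReal (u + z) 1 := by
          rw [integral_gaussianReal_eq_integral_smul one_ne_zero]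
          congr 1 with y
          simp only [gaussianPDFReal, hh, NNReal.coe_one, mul_one, smul_eq_mul]
          ring_nf
      _ = z - z ^ 2 := by rw [integral_quadratic_gaussianReal, NNReal.coe_one]; ring
      _ = 0 := by rcases hz with rfl | rfl <;> norm_num
  · intro u hae
    have hcont : Continuous (h u) := by rw [funext (hh u)]; fun_prop
    have hu := congrFun ((hcont.ae_eq_iff_eq volume continuous_const).1 hae) u
    simp [hh] at hu
end
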